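/- arXiv:1407.6892 — 4 statements merged into one kernel-verified Lean document; each statement's English description precedes it below -/
import Mathlib

section
/- The group of units of the inverse monoid IO∞(ℤ) is isomorphic to the additive group of integers ℤ; concretely, α ∈ IO∞(ℤ) is invertible (i.e., α∘α⁻¹ = α⁻¹∘α = id_ℤ) if and only if α is a total monotone bijection of ℤ, and every such bijection is a translation x ↦ x + m for some m ∈ ℤ. -/
/-- A partial injective self-map of ℤ (encoded as a `PEquiv`) is monotone. -/
def PMono (f : ℤ ≃. ℤ) : Prop :=
  ∀ x y a b : ℤ, a ∈ f x → b ∈ f y → x ≤ y → a ≤ b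

/-- Domain of a partial injective self-map of ℤ. -/
def PDom (f : ℤ ≃. ℤ) : Set ℤ := {x | (f x).isSome}

/-- Range of a partial injective self-map of ℤ. -/
def PRan (f : ℤ ≃. ℤ) : Set ℤ := {y | (f.symm y).isSome}

/-- Membership in IO∞(ℤ): injective (built into `PEquiv`), monotone,
with cofinite domain and cofinite range. -/
def IOZ (f : ℤ ≃. ℤ) : Prop :=
  PMono f ∧ (PDom f)ᶜ.Finite ∧ (PRan f)ᶜ.Finite

/-!
A unit of IO∞(ℤ) is total (its product with the inverse is the identity) and so is its inverse,
so it restricts to a strictly monotone bijection of ℤ, that is, an order automorphism. Order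
automorphisms commute with the successor map `x ↦ x + 1`, hence are translations. Conversely a
translation and its inverse translation are mutually inverse elements of IO∞(ℤ).
-/

namespace PEquiv

variable {α β : Type*}

theorem isSome_of_trans_eq_refl {f : α ≃. β} {g : β ≃. α} (h : f.trans g = PEquiv.refl α)
    (a : α) : (f a).isSome := by
  obtain ⟨b, hb, -⟩ := (trans_eq_some f g a a).1 (by rw [h, refl_apply])
  simp [hb]

theorem isSome_symm_of_trans_eq_refl {f : α ≃. β} {g : β ≃. α} (h : g.trans f = PEquiv.refl β)
    (b : β) : (f.symm b).isSome :=
  isSome_of_trans_eq_refl (g := g.symm) (by rw [← symm_trans_rev, h, symm_refl]) b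

end PEquiv

theorem Int.orderIso_apply_eq_add (e : ℤ ≃o ℤ) (x : ℤ) : e x = x + e 0 := by
  induction x using Int.induction_on with
  | zero => simp
  | succ n ih =>
    rw [← Order.succ_eq_add_one, e.map_succ, ih]
    simp only [Order.succ_eq_add_one]
    ring
  | pred n ih =>
    rw [← Order.pred_eq_sub_one, e.map_pred, ih]
    simp only [Order.pred_eq_sub_one]
    ring

theorem PMono.strictMono_of_forall_eq_some {f : ℤ ≃. ℤ} (hf : PMono f) {φ : ℤ → ℤ}
    (hφ : ∀ x, f x = some (φ x)) : StrictMono φ :=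
  Monotone.strictMono_of_injective (fun x y hxy => hf x y _ _ (hφ x) (hφ y) hxy)
    fun x y hxy => f.inj (b := φ x) (hφ x) (by rw [hxy]; exact hφ y)

theorem ioz_toPEquiv_of_monotone (e : ℤ ≃ ℤ) (he : Monotone e) : IOZ e.toPEquiv := by
  refine ⟨fun x y a b ha hb hxy => ?_, ?_, ?_⟩
  · simp only [Equiv.toPEquiv_apply, Option.mem_def, Option.some_inj] at ha hb
    exact ha ▸ hb ▸ he hxy
  · simp [PDom, Equiv.toPEquiv_apply]
  · simp [PRan, ← Equiv.toPEquiv_symm, Equiv.toPEquiv_apply]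

/-- α ∈ IO∞(ℤ) is a unit iff it is a translation x ↦ x + m; hence the
group of units of IO∞(ℤ) is (isomorphic to) the additive group ℤ. -/
theorem stmt5 (α : ℤ ≃. ℤ) (hα : IOZ α) :
    (∃ β : ℤ ≃. ℤ, IOZ β ∧ α.trans β = PEquiv.refl ℤ ∧ β.trans α = PEquiv.refl ℤ) ↔
      ∃ m : ℤ, ∀ x : ℤ, α x = some (x + m) := by
  constructor
  · rintro ⟨β, -, hαβ, hβα⟩
    choose φ hφ using fun x => Option.isSome_iff_exists.1 (PEquiv.isSome_of_trans_eq_refl hαβ x)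
    have hφ_surj : Function.Surjective φ := fun y => by
      obtain ⟨x, hx⟩ := Option.isSome_iff_exists.1 (PEquiv.isSome_symm_of_trans_eq_refl hβα y)
      exact ⟨x, Option.some_injective _ ((hφ x).symm.trans (α.eq_some_iff.1 hx))⟩
    let e := (hα.1.strictMono_of_forall_eq_some hφ).orderIsoOfSurjective φ hφ_surj
    exact ⟨e 0, fun x => (hφ x).trans (congrArg some (Int.orderIso_apply_eq_add e x))⟩
  · rintro ⟨m, hm⟩
    have hα_eq : α = (Equiv.addRight m).toPEquiv := PEquiv.ext fun x => hm x
    refine ⟨(Equiv.addRight m).symm.toPEquiv, ioz_toPEquiv_of_monotone _ ?_, ?_, ?_⟩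
    · exact fun _ _ h => by simpa using h
    · rw [hα_eq, ← Equiv.toPEquiv_trans, Equiv.self_trans_symm, Equiv.toPEquiv_refl]
    · rw [hα_eq, ← Equiv.toPEquiv_trans, Equiv.symm_trans_self, Equiv.toPEquiv_refl]
end

section
/- The inverse monoid IO∞(ℤ) is bisimple: for any α, β ∈ IO∞(ℤ) there exist γ, δ ∈ IO∞(ℤ) such that γ∘α∘δ ℋ β; equivalently, any two elements are 𝒟-equivalent. -/
/-- Principal right ideal αS¹ in IO∞(ℤ). -/
def rIdeal (α : ℤ ≃. ℤ) : Set (ℤ ≃. ℤ) := {γ | ∃ s, IOZ s ∧ γ = α.trans s}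

/-- Principal left ideal S¹α in IO∞(ℤ). -/
def lIdeal (α : ℤ ≃. ℤ) : Set (ℤ ≃. ℤ) := {γ | ∃ s, IOZ s ∧ γ = s.trans α}

namespace PEquiv

variable {α β γ : Type*} {s : Set α} {t : Set β}

theorem trans_apply (f : α ≃. β) (g : β ≃. γ) (a : α) : f.trans g a = (f a).bind g := rfl

open Classical in
noncomputable def ofSubtypeEquiv (e : s ≃ t) : α ≃. β where
  toFun a := if h : a ∈ s then some (e ⟨a, h⟩) else none
  invFun b := if h : b ∈ t then some (e.symm ⟨b, h⟩) else none
  inv a b := by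
    constructor <;> intro h <;> split_ifs at h <;> cases h <;> simp

theorem ofSubtypeEquiv_apply_of_mem (e : s ≃ t) {a : α} (ha : a ∈ s) :
    ofSubtypeEquiv e a = some (e ⟨a, ha⟩ : β) := by
  simp [ofSubtypeEquiv, ha]

theorem ofSubtypeEquiv_apply_of_notMem (e : s ≃ t) {a : α} (ha : a ∉ s) :
    ofSubtypeEquiv e a = none := by
  simp [ofSubtypeEquiv, ha]

theorem symm_ofSubtypeEquiv (e : s ≃ t) : (ofSubtypeEquiv e).symm = ofSubtypeEquiv e.symm := rfl

theorem isSome_ofSubtypeEquiv_apply (e : s ≃ t) (a : α) :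
    (ofSubtypeEquiv e a).isSome ↔ a ∈ s := by
  by_cases ha : a ∈ s
  · simp [ofSubtypeEquiv_apply_of_mem e ha, ha]
  · simp [ofSubtypeEquiv_apply_of_notMem e ha, ha]

theorem ofSet_trans_of_forall_isSome_mem [DecidablePred (· ∈ s)] {f : α ≃. β}
    (h : ∀ a, (f a).isSome → a ∈ s) : (ofSet s).trans f = f := by
  ext a b
  rw [trans_eq_some]
  simp only [ofSet_eq_some_iff]
  exact ⟨fun ⟨_, ⟨rfl, _⟩, hb⟩ => hb, fun hb => ⟨a, ⟨rfl, h a (Option.isSome_of_mem hb)⟩, hb⟩⟩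

end PEquiv

theorem Set.Finite.exists_gt_mem_of_compl {α : Type*} [LinearOrder α] [NoMaxOrder α] {S : Set α}
    (hS : Sᶜ.Finite) (x : α) : ∃ y ∈ S, x < y := by
  have : Nonempty α := ⟨x⟩
  obtain ⟨U, hU⟩ := hS.bddAbove
  obtain ⟨y, hy⟩ := exists_gt (max x U)
  refine ⟨y, ?_, (le_max_left x U).trans_lt hy⟩
  by_contra hyS
  exact (hU hyS).not_gt ((le_max_right x U).trans_lt hy)

theorem Set.Finite.exists_lt_mem_of_compl {α : Type*} [LinearOrder α] [NoMinOrder α] {S : Set α}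
    (hS : Sᶜ.Finite) (x : α) : ∃ y ∈ S, y < x :=
  Set.Finite.exists_gt_mem_of_compl (α := αᵒᵈ) hS x

-- A cofinite subset of ℤ is a locally finite linear order without endpoints.
open Classical in
noncomputable def orderIsoIntOfFiniteCompl (S : Set ℤ) (hS : Sᶜ.Finite) : S ≃o ℤ :=
  letI : SuccOrder S := LinearLocallyFiniteOrder.succOrder S
  letI : PredOrder S := LinearLocallyFiniteOrder.predOrder S
  haveI : NoMaxOrder S := ⟨fun x => by
    obtain ⟨y, hyS, hxy⟩ := hS.exists_gt_mem_of_compl x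
    exact ⟨⟨y, hyS⟩, hxy⟩⟩
  haveI : NoMinOrder S := ⟨fun x => by
    obtain ⟨y, hyS, hxy⟩ := hS.exists_lt_mem_of_compl x
    exact ⟨⟨y, hyS⟩, hxy⟩⟩
  haveI : Nonempty S := by
    obtain ⟨y, hyS, -⟩ := hS.exists_gt_mem_of_compl 0
    exact ⟨⟨y, hyS⟩⟩
  orderIsoIntOfLinearSuccPredArch

open PEquiv

theorem PDom_symm (f : ℤ ≃. ℤ) : PDom f.symm = PRan f := rfl

theorem PDom_trans_of_PRan_subset {f g : ℤ ≃. ℤ} (h : PRan f ⊆ PDom g) :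
    PDom (f.trans g) = PDom f := by
  ext x
  simp only [PDom, Set.mem_ofPred_eq, trans_apply]
  rcases hfx : f x with _ | m
  · rfl
  · simp only [Option.bind_some, Option.isSome_some, iff_true]
    exact h (Option.isSome_of_mem ((f.mem_iff_mem).2 hfx))

theorem PDom_trans_compl_finite {f g : ℤ ≃. ℤ} (hf : (PDom f)ᶜ.Finite) (hg : (PDom g)ᶜ.Finite) :
    (PDom (f.trans g))ᶜ.Finite := by
  refine (hf.union (hg.biUnion fun m _ => (f.symm m).toFinset.finite_toSet)).subset ?_
  intro x hx
  rcases hfx : f x with _ | m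
  · exact Or.inl (by simp [PDom, hfx])
  · refine Or.inr (Set.mem_biUnion (x := m) (fun hm => hx ?_) ?_)
    · simpa [PDom, trans_apply, hfx] using hm
    · simpa using (f.mem_iff_mem).2 hfx

theorem PMono.symm {f : ℤ ≃. ℤ} (hf : PMono f) : PMono f.symm := by
  intro x y a b ha hb hxy
  rw [f.mem_iff_mem] at ha hb
  by_contra! hba
  have hyx : y ≤ x := hf b a y x hb ha hba.le
  obtain rfl : x = y := le_antisymm hxy hyx
  exact hba.ne (f.inj hb ha)

theorem PMono.trans {f g : ℤ ≃. ℤ} (hf : PMono f) (hg : PMono g) : PMono (f.trans g) := by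
  intro x y a b ha hb hxy
  obtain ⟨m, hfm, hga⟩ := (f.mem_trans g x a).1 ha
  obtain ⟨k, hfk, hgb⟩ := (f.mem_trans g y b).1 hb
  exact hg m k a b hga hgb (hf x y m k hfm hfk hxy)

theorem IOZ.symm {f : ℤ ≃. ℤ} (hf : IOZ f) : IOZ f.symm :=
  ⟨hf.1.symm, hf.2.2, hf.2.1⟩

theorem IOZ.trans {f g : ℤ ≃. ℤ} (hf : IOZ f) (hg : IOZ g) : IOZ (f.trans g) := by
  refine ⟨hf.1.trans hg.1, PDom_trans_compl_finite hf.2.1 hg.2.1, ?_⟩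
  rw [← PDom_symm, symm_trans_rev]
  exact PDom_trans_compl_finite hg.2.2 hf.2.2

theorem PDom_ofSubtypeEquiv {s t : Set ℤ} (e : s ≃ t) : PDom (ofSubtypeEquiv e) = s :=
  Set.ext (isSome_ofSubtypeEquiv_apply e)

theorem PRan_ofSubtypeEquiv {s t : Set ℤ} (e : s ≃ t) : PRan (ofSubtypeEquiv e) = t := by
  rw [← PDom_symm, symm_ofSubtypeEquiv, PDom_ofSubtypeEquiv]

theorem PMono_ofSubtypeEquiv {s t : Set ℤ} (e : s ≃o t) : PMono (ofSubtypeEquiv e.toEquiv) := by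
  intro x y a b ha hb hxy
  have hx : x ∈ s := (isSome_ofSubtypeEquiv_apply _ x).1 (Option.isSome_of_mem ha)
  have hy : y ∈ s := (isSome_ofSubtypeEquiv_apply _ y).1 (Option.isSome_of_mem hb)
  simp only [Option.mem_def, ofSubtypeEquiv_apply_of_mem _ hx, ofSubtypeEquiv_apply_of_mem _ hy,
    Option.some_inj] at ha hb
  subst ha hb
  exact e.monotone (Subtype.mk_le_mk.2 hxy)

theorem IOZ_ofSubtypeEquiv {s t : Set ℤ} (hs : sᶜ.Finite) (ht : tᶜ.Finite) (e : s ≃o t) :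
    IOZ (ofSubtypeEquiv e.toEquiv) :=
  ⟨PMono_ofSubtypeEquiv e, by rwa [PDom_ofSubtypeEquiv], by rwa [PRan_ofSubtypeEquiv]⟩

/-- IO∞(ℤ) is bisimple: for all α, β there are γ, δ with γ∘α∘δ ℋ β. -/
theorem stmt8 (α β : ℤ ≃. ℤ) (hα : IOZ α) (hβ : IOZ β) :
    ∃ γ δ : ℤ ≃. ℤ, IOZ γ ∧ IOZ δ ∧
      rIdeal ((γ.trans α).trans δ) = rIdeal β ∧
      lIdeal ((γ.trans α).trans δ) = lIdeal β := by
  let e : PDom β ≃o PDom α :=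
    (orderIsoIntOfFiniteCompl _ hβ.2.1).trans (orderIsoIntOfFiniteCompl _ hα.2.1).symm
  let γ := ofSubtypeEquiv e.toEquiv
  have hγ : IOZ γ := IOZ_ofSubtypeEquiv hβ.2.1 hα.2.1 e
  let τ := γ.trans α
  have hτ : PDom τ = PDom β := by
    rw [PDom_trans_of_PRan_subset (PRan_ofSubtypeEquiv _).subset, PDom_ofSubtypeEquiv]
  have hβ_eq : τ.trans (τ.symm.trans β) = β := by
    rw [← trans_assoc, self_trans_symm]
    exact ofSet_trans_of_forall_isSome_mem fun x hx => hτ.ge hx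
  refine ⟨γ, τ.symm.trans β, hγ, (hγ.trans hα).symm.trans hβ, ?_, ?_⟩ <;> rw [hβ_eq]
end

section
/- Let σ be the least group congruence on IO∞(ℤ), defined by α σ β iff α∘ε = β∘ε for some idempotent ε. Then the quotient IO∞(ℤ)/σ is isomorphic to the additive group ℤ × ℤ. -/
/-- Idempotent element of IO∞(ℤ). -/
def IsIdem (ε : ℤ ≃. ℤ) : Prop := ε.trans ε = ε

/-- The least group congruence σ on IO∞(ℤ). -/
def sigmaZ (α β : ℤ ≃. ℤ) : Prop := ∃ ε : ℤ ≃. ℤ, IOZ ε ∧ IsIdem ε ∧ α.trans ε = β.trans ε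

open Filter

section PartialMaps

variable {f : ℤ ≃. ℤ} {x y w a b : ℤ}

lemma mem_pDom_iff : x ∈ PDom f ↔ ∃ y, f x = some y := Option.isSome_iff_exists

lemma mem_pRan_iff : y ∈ PRan f ↔ ∃ x, f x = some y := by
  simp only [PRan, Set.mem_ofPred_eq, Option.isSome_iff_exists, PEquiv.eq_some_iff]

lemma PMono.lt_of_lt (hf : PMono f) (hx : f x = some a) (hy : f y = some b) (hxy : x < y) :
    a < b :=
  (hf x y a b hx hy hxy.le).lt_of_ne fun hab => hxy.ne (f.inj hx (hab ▸ hy))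

lemma PMono.lt_of_lt_apply (hf : PMono f) (hx : f x = some a) (hy : f y = some b) (hab : a < b) :
    x < y :=
  lt_of_not_ge fun hyx => (hf y x b a hy hx hyx).not_gt hab

lemma PMono.apply_add_one (hf : PMono f) (hx : f x = some a) (hx' : f (x + 1) = some b)
    (hw : f w = some (a + 1)) : b = a + 1 := by
  have hab := hf.lt_of_lt hx hx' (lt_add_one x)
  have hxw := hf.lt_of_lt_apply hx hw (lt_add_one a)
  have := hf (x + 1) w b (a + 1) hx' hw (by omega)
  omega

lemma PMono.apply_sub_one (hf : PMono f) (hx : f x = some a) (hx' : f (x - 1) = some b)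
    (hw : f w = some (a - 1)) : b = a - 1 := by
  have hab := hf.lt_of_lt hx' hx (sub_one_lt x)
  have hwx := hf.lt_of_lt_apply hw hx (sub_one_lt a)
  have := hf w (x - 1) (a - 1) b hw hx' (by omega)
  omega

lemma IOZ.eventually_mem_dom (hf : IOZ f) : ∀ᶠ x in cofinite, ∃ y, f x = some y :=
  eventually_cofinite.2 <| hf.2.1.subset fun _ hx hdom => hx (mem_pDom_iff.1 hdom)

lemma IOZ.eventually_mem_ran (hf : IOZ f) : ∀ᶠ y in cofinite, ∃ x, f x = some y :=
  eventually_cofinite.2 <| hf.2.2.subset fun _ hy hran => hy (mem_pRan_iff.1 hran)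

lemma IsIdem.eq_of_apply_eq_some {ε : ℤ ≃. ℤ} (h : IsIdem ε) (hxy : ε x = some y) : x = y := by
  obtain ⟨z, hxz, hzy⟩ := (PEquiv.trans_eq_some ε ε x y).1 (h.symm ▸ hxy)
  obtain rfl : z = y := Option.some_inj.1 (hxz.symm.trans hxy)
  exact ε.inj hxy hzy

end PartialMaps

section Idempotents

variable (s : Set ℤ) [DecidablePred (· ∈ s)]

lemma ioz_ofSet (hs : sᶜ.Finite) : IOZ (PEquiv.ofSet s) := by
  have hdom : PDom (PEquiv.ofSet s) = s := by ext; simp [mem_pDom_iff]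
  have hran : PRan (PEquiv.ofSet s) = s := by ext; simp [mem_pRan_iff]
  refine ⟨fun x y a b ha hb hxy => ?_, by rwa [hdom], by rwa [hran]⟩
  rw [PEquiv.mem_ofSet_iff] at ha hb
  omega

lemma isIdem_ofSet : IsIdem (PEquiv.ofSet s) := by
  ext x y
  simp only [PEquiv.trans_eq_some, PEquiv.ofSet_eq_some_iff]
  grind

end Idempotents

-- The idempotent is the partial identity avoiding the finitely many values taken where `α` and
-- `β` differ.
lemma sigmaZ_of_eventuallyEq {α β : ℤ ≃. ℤ} (h : α =ᶠ[cofinite] β) : sigmaZ α β := by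
  classical
  set D := {x | α x ≠ β x}
  set T : Set ℤ := some ⁻¹' (α '' D ∪ β '' D)
  have hT : T.Finite := by
    have hD : D.Finite := eventually_cofinite.1 h
    exact ((hD.image _).union (hD.image _)).preimage (Option.some_injective _).injOn
  refine ⟨PEquiv.ofSet Tᶜ, ioz_ofSet _ (by rwa [compl_compl]), isIdem_ofSet _, ?_⟩
  ext x y
  by_cases hx : x ∈ D
  · have hαT : α x = some y → y ∈ T := fun hy => Or.inl ⟨x, hx, hy⟩
    have hβT : β x = some y → y ∈ T := fun hy => Or.inr ⟨x, hx, hy⟩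
    simp only [PEquiv.trans_eq_some, PEquiv.ofSet_eq_some_iff, Set.mem_compl_iff]
    grind
  · simp only [PEquiv.trans_eq_some, show α x = β x from not_not.1 hx]

def EventuallyShift (l : Filter ℤ) (f : ℤ ≃. ℤ) (c : ℤ) : Prop := ∀ᶠ x in l, f x = some (x + c)

namespace EventuallyShift

variable {l : Filter ℤ} {f g : ℤ ≃. ℤ} {c d : ℤ}

lemma unique [l.NeBot] (h : EventuallyShift l f c) (h' : EventuallyShift l f d) : c = d := by
  obtain ⟨x, hc, hd⟩ := (h.and h').exists
  rw [hc, Option.some_inj] at hd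
  omega

lemma trans (hl : Tendsto (· + c) l l) (hf : EventuallyShift l f c) (hg : EventuallyShift l g d) :
    EventuallyShift l (f.trans g) (c + d) := by
  filter_upwards [hf, hl.eventually hg] with x hfx hgx
  rw [PEquiv.trans_eq_some]
  exact ⟨x + c, hfx, by rw [hgx, add_assoc]⟩

lemma eventuallyEq (hf : EventuallyShift l f c) (hg : EventuallyShift l g c) : f =ᶠ[l] g := by
  filter_upwards [hf, hg] with x hfx hgx
  rw [hfx, hgx]

end EventuallyShift

lemma IOZ.eventuallyShift_zero_of_isIdem {ε : ℤ ≃. ℤ} (hε : IOZ ε) (hid : IsIdem ε)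
    {l : Filter ℤ} (hl : l ≤ cofinite) : EventuallyShift l ε 0 := by
  filter_upwards [hε.eventually_mem_dom.filter_mono hl] with x ⟨y, hxy⟩
  obtain rfl := hid.eq_of_apply_eq_some hxy
  rwa [add_zero]

lemma IOZ.exists_eventuallyShift_atTop {f : ℤ ≃. ℤ} (hf : IOZ f) :
    ∃ c, EventuallyShift atTop f c := by
  obtain ⟨A, hA⟩ := eventually_atTop.1 (hf.eventually_mem_dom.filter_mono atTop_le_cofinite)
  obtain ⟨B, hB⟩ := eventually_atTop.1 (hf.eventually_mem_ran.filter_mono atTop_le_cofinite)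
  obtain ⟨a, ha⟩ := hA A le_rfl
  -- from a point `z ≥ A` with `f z ≥ B` on, `f` has no gaps
  obtain ⟨z, hz⟩ := hB (max a B) (le_max_right a B)
  have hAz : A ≤ z := le_of_not_gt fun hzA => (hf.1.lt_of_lt hz ha hzA).not_ge (le_max_left a B)
  refine ⟨max a B - z, eventually_atTop.2 ⟨z, fun x hzx => ?_⟩⟩
  induction x, hzx using Int.leInduction with
  | base => rw [hz, add_sub_cancel]
  | succ x hzx ih =>
    obtain ⟨b, hb⟩ := hA (x + 1) (by omega)
    obtain ⟨w, hw⟩ := hB (x + (max a B - z) + 1) (by omega)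
    rw [hb, hf.1.apply_add_one ih hb hw, add_right_comm]

lemma IOZ.exists_eventuallyShift_atBot {f : ℤ ≃. ℤ} (hf : IOZ f) :
    ∃ c, EventuallyShift atBot f c := by
  obtain ⟨A, hA⟩ := eventually_atBot.1 (hf.eventually_mem_dom.filter_mono atBot_le_cofinite)
  obtain ⟨B, hB⟩ := eventually_atBot.1 (hf.eventually_mem_ran.filter_mono atBot_le_cofinite)
  obtain ⟨a, ha⟩ := hA A le_rfl
  obtain ⟨z, hz⟩ := hB (min a B) (min_le_right a B)
  have hzA : z ≤ A := le_of_not_gt fun hAz => (hf.1.lt_of_lt ha hz hAz).not_ge (min_le_left a B)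
  refine ⟨min a B - z, eventually_atBot.2 ⟨z, fun x hxz => ?_⟩⟩
  induction x, hxz using Int.leInductionDown with
  | base => rw [hz, add_sub_cancel]
  | pred x hxz ih =>
    obtain ⟨b, hb⟩ := hA (x - 1) (by omega)
    obtain ⟨w, hw⟩ := hB (x + (min a B - z) - 1) (by omega)
    rw [hb, hf.1.apply_sub_one ih hb hw, sub_add_eq_add_sub]

-- Junk if `f` is not eventually a translation along `l`.
noncomputable def shiftAt (l : Filter ℤ) (f : ℤ ≃. ℤ) : ℤ := Classical.epsilon (EventuallyShift l f)

lemma EventuallyShift.shiftAt_eq {l : Filter ℤ} [l.NeBot] {f : ℤ ≃. ℤ} {c : ℤ}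
    (h : EventuallyShift l f c) : shiftAt l f = c :=
  (Classical.epsilon_spec ⟨c, h⟩).unique h

noncomputable def ends (f : ℤ ≃. ℤ) : ℤ × ℤ := (shiftAt atBot f, shiftAt atTop f)

section Ends

variable {f g ε : ℤ ≃. ℤ}

lemma ends_eq {d c : ℤ} (hd : EventuallyShift atBot f d) (hc : EventuallyShift atTop f c) :
    ends f = (d, c) :=
  Prod.ext hd.shiftAt_eq hc.shiftAt_eq

lemma IOZ.ends_trans (hf : IOZ f) (hg : IOZ g) : ends (f.trans g) = ends f + ends g := by
  obtain ⟨d, hd⟩ := hf.exists_eventuallyShift_atBot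
  obtain ⟨c, hc⟩ := hf.exists_eventuallyShift_atTop
  obtain ⟨d', hd'⟩ := hg.exists_eventuallyShift_atBot
  obtain ⟨c', hc'⟩ := hg.exists_eventuallyShift_atTop
  rw [ends_eq hd hc, ends_eq hd' hc', Prod.mk_add_mk,
    ends_eq (hd.trans (tendsto_atBot_add_const_right _ d tendsto_id) hd')
      (hc.trans (tendsto_atTop_add_const_right _ c tendsto_id) hc')]

lemma IOZ.ends_trans_of_isIdem (hf : IOZ f) (hε : IOZ ε) (hid : IsIdem ε) :
    ends (f.trans ε) = ends f := by
  rw [hf.ends_trans hε, ends_eq (hε.eventuallyShift_zero_of_isIdem hid atBot_le_cofinite)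
    (hε.eventuallyShift_zero_of_isIdem hid atTop_le_cofinite), Prod.mk_zero_zero, add_zero]

lemma IOZ.sigmaZ_of_ends_eq (hf : IOZ f) (hg : IOZ g) (h : ends f = ends g) : sigmaZ f g := by
  obtain ⟨d, hd⟩ := hf.exists_eventuallyShift_atBot
  obtain ⟨c, hc⟩ := hf.exists_eventuallyShift_atTop
  obtain ⟨d', hd'⟩ := hg.exists_eventuallyShift_atBot
  obtain ⟨c', hc'⟩ := hg.exists_eventuallyShift_atTop
  obtain ⟨rfl, rfl⟩ := Prod.mk.inj (ends_eq hd hc ▸ ends_eq hd' hc' ▸ h)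
  apply sigmaZ_of_eventuallyEq
  rw [Int.cofinite_eq]
  exact eventually_sup.2 ⟨hd.eventuallyEq hd', hc.eventuallyEq hc'⟩

end Ends

-- The gap `[0, (d - c)⁺)` in the domain keeps it injective when `c < d`.
def jump (d c : ℤ) : ℤ ≃. ℤ where
  toFun x := if x < 0 then some (x + d) else if (d - c).toNat ≤ x then some (x + c) else none
  invFun y := if y < d then some (y - d) else if (d - c).toNat + c ≤ y then some (y - c) else none
  inv x y := by split_ifs <;> simp <;> omega

lemma ioz_jump (d c : ℤ) : IOZ (jump d c) := by
  refine ⟨fun x y a b ha hb hxy => ?_, (Set.finite_Ico (0 : ℤ) (d - c).toNat).subset fun x hx => ?_,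
    (Set.finite_Ico d ((d - c).toNat + c)).subset fun y hy => ?_⟩
  · simp only [jump, PEquiv.coe_mk, Option.mem_def] at ha hb
    split_ifs at ha hb <;> simp at ha hb <;> omega
  · simp only [Set.mem_compl_iff, mem_pDom_iff, jump, PEquiv.coe_mk] at hx
    split_ifs at hx <;> simp at hx ⊢
    omega
  · simp only [Set.mem_compl_iff, PRan, jump, PEquiv.symm, PEquiv.coe_mk,
      Set.mem_ofPred_eq] at hy
    split_ifs at hy <;> simp at hy ⊢
    omega

lemma ends_jump (d c : ℤ) : ends (jump d c) = (d, c) :=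
  ends_eq (eventually_atBot.2 ⟨-1, fun x hx => if_pos (by omega)⟩)
    (eventually_atTop.2 ⟨(d - c).toNat, fun x hx => by
      rw [jump, PEquiv.coe_mk, if_neg (by omega), if_pos hx]⟩)

/-- IO∞(ℤ)/σ ≅ ℤ × ℤ: there is a surjective homomorphism onto
ℤ(+) × ℤ(+) whose kernel is exactly σ. -/
theorem stmt11 : ∃ φ : (ℤ ≃. ℤ) → ℤ × ℤ,
    (∀ α β : ℤ ≃. ℤ, IOZ α → IOZ β → φ (α.trans β) = φ α + φ β) ∧
    (∀ p : ℤ × ℤ, ∃ α : ℤ ≃. ℤ, IOZ α ∧ φ α = p) ∧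
    (∀ α β : ℤ ≃. ℤ, IOZ α → IOZ β → (φ α = φ β ↔ sigmaZ α β)) := by
  refine ⟨ends, fun α β hα hβ => hα.ends_trans hβ,
    fun ⟨d, c⟩ => ⟨jump d c, ioz_jump d c, ends_jump d c⟩,
    fun α β hα hβ => ⟨hα.sigmaZ_of_ends_eq hβ, ?_⟩⟩
  rintro ⟨ε, hε, hid, hαβ⟩
  rw [← hα.ends_trans_of_isIdem hε hid, hαβ, hβ.ends_trans_of_isIdem hε hid]
end

section
/- Let S = (IO∞(ℤ))ⁿ, I ⊂ {1,…,n} proper, and let ρ be the kernel congruence of the homomorphism π^I. Then ρ_min, defined by a ρ_min b iff there is an idempotent e with ae = be and e ρ a⁻¹a ρ b⁻¹b, equals the composite congruence σ_[i₁]∘…∘σ_[i_k] where {i₁,…,i_k} = {1,…,n} \ I. -/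
/-- Membership in the direct power (IO∞(ℤ))ⁿ. -/
def IOZn (n : ℕ) (α : Fin n → ℤ ≃. ℤ) : Prop := ∀ i, IOZ (α i)

/-- Coordinatewise composition on the direct power (α then β, as in the paper). -/
def mulN {n : ℕ} (α β : Fin n → ℤ ≃. ℤ) : Fin n → ℤ ≃. ℤ := fun i => (α i).trans (β i)

/-- The identity 𝕀 of (IO∞(ℤ))ⁿ. -/
def oneN (n : ℕ) : Fin n → ℤ ≃. ℤ := fun _ => PEquiv.refl ℤ

/-- εᵢ°: the tuple with ε in coordinate i and identities elsewhere. -/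
def epsT {n : ℕ} (i : Fin n) (ε : ℤ ≃. ℤ) : Fin n → ℤ ≃. ℤ :=
  fun j => if j = i then ε else PEquiv.refl ℤ

/-- A congruence on the semigroup (IO∞(ℤ))ⁿ (relative to the carrier `IOZn n`). -/
def IsCongOn (n : ℕ) (ρ : (Fin n → ℤ ≃. ℤ) → (Fin n → ℤ ≃. ℤ) → Prop) : Prop :=
  (∀ α, IOZn n α → ρ α α) ∧
  (∀ α β, IOZn n α → IOZn n β → ρ α β → ρ β α) ∧
  (∀ α β γ, IOZn n α → IOZn n β → IOZn n γ → ρ α β → ρ β γ → ρ α γ) ∧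
  (∀ α β γ, IOZn n α → IOZn n β → IOZn n γ → ρ α β →
    ρ (mulN α γ) (mulN β γ) ∧ ρ (mulN γ α) (mulN γ β))

/-- The congruence σ_[i]. -/
def sigmaI (n : ℕ) (i : Fin n) (α β : Fin n → ℤ ≃. ℤ) : Prop :=
  ∃ ε : ℤ ≃. ℤ, IOZ ε ∧ IsIdem ε ∧ mulN α (epsT i ε) = mulN β (epsT i ε)

/-- D(α,β): the set of coordinates where α and β differ. -/
def Dset {n : ℕ} (α β : Fin n → ℤ ≃. ℤ) : Set (Fin n) := {i | α i ≠ β i}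

/-- Idempotent tuple. -/
def IsIdemN {n : ℕ} (ε : Fin n → ℤ ≃. ℤ) : Prop := ∀ i, (ε i).trans (ε i) = ε i

/-- σ_[i₁,…,i_k] for the set of indices t: α and β agree after right multiplication
by a product ε°_{i₁}⋯ε°_{i_k} of idempotents supported on t. -/
def sigmaSet (n : ℕ) (t : Finset (Fin n)) (α β : Fin n → ℤ ≃. ℤ) : Prop :=
  ∃ ε : Fin n → ℤ ≃. ℤ, IOZn n ε ∧ IsIdemN ε ∧ (∀ i ∉ t, ε i = PEquiv.refl ℤ) ∧
    mulN α ε = mulN β ε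

/-- The map π^I keeping coordinates in I and replacing the others by the identity. -/
def piI (n : ℕ) (I : Finset (Fin n)) (α : Fin n → ℤ ≃. ℤ) : Fin n → ℤ ≃. ℤ :=
  fun i => if i ∈ I then α i else PEquiv.refl ℤ

/-- Coordinatewise inversion in (IO∞(ℤ))ⁿ. -/
def invN {n : ℕ} (α : Fin n → ℤ ≃. ℤ) : Fin n → ℤ ≃. ℤ := fun i => (α i).symm

/-!
On the coordinates in `I` the idempotent `ε` of a `ρ_min`-witness is forced to be
`αᵢ⁻¹αᵢ = βᵢ⁻¹βᵢ`, and then `αᵢ = αᵢ εᵢ = βᵢ εᵢ = βᵢ`; a `σ`-witness supported off `I` forces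
`αᵢ = βᵢ` there as well. Hence both relations say that `α` and `β` agree on `I` and become equal
off `I` after multiplication by an idempotent, and a witness of one is turned into a witness of the
other by replacing its coordinates in `I` by the identity, resp. by `αᵢ⁻¹αᵢ`.
-/

namespace PEquiv

variable {α β : Type*}

theorem trans_symm_trans_self (f : α ≃. β) : f.trans (f.symm.trans f) = f := by
  ext a b
  change b ∈ f.trans (f.symm.trans f) a ↔ b ∈ f a
  simp only [mem_trans]
  constructor
  · rintro ⟨c, hc, d, hd, hb⟩
    rw [f.mem_iff_mem] at hd
    rwa [Option.mem_unique hb hd]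
  · exact fun hb => ⟨b, hb, a, f.eq_some_iff.mpr hb, hb⟩

end PEquiv

theorem IOZ_ofSet {s : Set ℤ} [DecidablePred (· ∈ s)] (hs : sᶜ.Finite) :
    IOZ (PEquiv.ofSet s) := by
  refine ⟨fun x y a b ha hb hxy => ?_, ?_, ?_⟩
  · rw [PEquiv.mem_ofSet_iff] at ha hb
    exact ha.1 ▸ hb.1 ▸ hxy
  · convert hs using 2
    simp [PDom, Option.isSome_iff_exists]
  · convert hs using 2
    simp [PRan, Option.isSome_iff_exists]

theorem IOZ_refl : IOZ (PEquiv.refl ℤ) :=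
  PEquiv.ofSet_univ (α := ℤ) ▸ IOZ_ofSet (by simp)

theorem IOZ_symm_trans_self {f : ℤ ≃. ℤ} (hf : IOZ f) : IOZ (f.symm.trans f) := by
  rw [PEquiv.symm_trans_self]
  exact IOZ_ofSet hf.2.2

theorem isIdem_symm_trans_self (f : ℤ ≃. ℤ) : IsIdem (f.symm.trans f) := by
  rw [IsIdem, PEquiv.trans_assoc, PEquiv.trans_symm_trans_self]

section Coordinatewise

variable {n : ℕ} {I : Finset (Fin n)} {α β ε : Fin n → ℤ ≃. ℤ}

theorem piI_eq_piI_iff : piI n I α = piI n I β ↔ ∀ i ∈ I, α i = β i := by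
  simp only [funext_iff, piI]
  exact ⟨fun h i hi => by simpa [hi] using h i, fun h i => by split_ifs with hi <;> simp [h, hi]⟩

theorem IOZn_piecewise {δ : Fin n → ℤ ≃. ℤ} (hδ : IOZn n δ) (hε : IOZn n ε) :
    IOZn n (I.piecewise δ ε) :=
  fun i => I.piecewise_cases δ ε (fun f => IOZ f) (hδ i) (hε i)

theorem isIdemN_piecewise {δ : Fin n → ℤ ≃. ℤ} (hδ : IsIdemN δ) (hε : IsIdemN ε) :
    IsIdemN (I.piecewise δ ε) :=
  fun i => I.piecewise_cases δ ε (fun f => f.trans f = f) (hδ i) (hε i)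

theorem mulN_piecewise_eq (hI : ∀ i ∈ I, α i = β i) (h : mulN α ε = mulN β ε)
    (δ : Fin n → ℤ ≃. ℤ) : mulN α (I.piecewise δ ε) = mulN β (I.piecewise δ ε) := by
  funext i
  by_cases hi : i ∈ I
  · simp [mulN, hI i hi]
  · simpa [mulN, hi] using congrFun h i

theorem eq_on_of_sigmaSet_compl (h : sigmaSet n Iᶜ α β) : ∀ i ∈ I, α i = β i := by
  obtain ⟨ε, -, -, hsupp, hmul⟩ := h
  intro i hi
  simpa [mulN, hsupp i (by simpa using hi)] using congrFun hmul i

/-- `ρ_min` for the kernel `ρ` of `π^I`. -/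
def rhoMin (n : ℕ) (I : Finset (Fin n)) (α β : Fin n → ℤ ≃. ℤ) : Prop :=
  ∃ ε : Fin n → ℤ ≃. ℤ, IOZn n ε ∧ IsIdemN ε ∧ mulN α ε = mulN β ε ∧
    piI n I ε = piI n I (mulN (invN α) α) ∧ piI n I ε = piI n I (mulN (invN β) β)

theorem eq_on_of_rhoMin (h : rhoMin n I α β) : ∀ i ∈ I, α i = β i := by
  obtain ⟨ε, -, -, hmul, hεα, hεβ⟩ := h
  intro i hi
  have hα : ε i = (α i).symm.trans (α i) := piI_eq_piI_iff.mp hεα i hi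
  have hβ : ε i = (β i).symm.trans (β i) := piI_eq_piI_iff.mp hεβ i hi
  calc α i = (α i).trans (ε i) := by rw [hα, PEquiv.trans_symm_trans_self]
    _ = (β i).trans (ε i) := congrFun hmul i
    _ = β i := by rw [hβ, PEquiv.trans_symm_trans_self]

theorem sigmaSet_compl_of_rhoMin (h : rhoMin n I α β) : sigmaSet n Iᶜ α β := by
  have hI := eq_on_of_rhoMin h
  obtain ⟨ε, hε, hεidem, hmul, -⟩ := h
  refine ⟨I.piecewise (fun _ => PEquiv.refl ℤ) ε, IOZn_piecewise (fun _ => IOZ_refl) hε,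
    isIdemN_piecewise (fun _ => PEquiv.trans_refl _) hεidem, fun i hi => ?_,
    mulN_piecewise_eq hI hmul _⟩
  rw [Finset.mem_compl, not_not] at hi
  exact I.piecewise_eq_of_mem _ _ hi

theorem rhoMin_of_sigmaSet_compl (hα : IOZn n α) (h : sigmaSet n Iᶜ α β) : rhoMin n I α β := by
  have hI := eq_on_of_sigmaSet_compl h
  obtain ⟨ε, hε, hεidem, -, hmul⟩ := h
  refine ⟨I.piecewise (mulN (invN α) α) ε,
    IOZn_piecewise (fun i => IOZ_symm_trans_self (hα i)) hε,
    isIdemN_piecewise (fun i => isIdem_symm_trans_self (α i)) hεidem,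
    mulN_piecewise_eq hI hmul _, ?_, ?_⟩ <;>
  refine piI_eq_piI_iff.mpr fun i hi => ?_ <;>
  simp [Finset.piecewise_eq_of_mem _ _ _ hi, mulN, invN, hI i hi]

end Coordinatewise

theorem stmt19_general (n : ℕ) (I : Finset (Fin n))
    (α β : Fin n → ℤ ≃. ℤ) (hα : IOZn n α) :
    (∃ ε : Fin n → ℤ ≃. ℤ, IOZn n ε ∧ IsIdemN ε ∧ mulN α ε = mulN β ε ∧
        piI n I ε = piI n I (mulN (invN α) α) ∧ piI n I ε = piI n I (mulN (invN β) β)) ↔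
      sigmaSet n Iᶜ α β :=
  ⟨sigmaSet_compl_of_rhoMin, rhoMin_of_sigmaSet_compl hα⟩

/-- for the kernel congruence ρ of π^I (a ρ b iff π^I a = π^I b),
the congruence ρ_min equals σ_[i₁]∘…∘σ_[i_k] where {i₁,…,i_k} = {1,…,n} \ I. -/
theorem stmt19 (n : ℕ) (I : Finset (Fin n)) (hI : I ≠ Finset.univ)
    (α β : Fin n → ℤ ≃. ℤ) (hα : IOZn n α) (hβ : IOZn n β) :
    (∃ ε : Fin n → ℤ ≃. ℤ, IOZn n ε ∧ IsIdemN ε ∧ mulN α ε = mulN β ε ∧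
        piI n I ε = piI n I (mulN (invN α) α) ∧ piI n I ε = piI n I (mulN (invN β) β)) ↔
      sigmaSet n Iᶜ α β :=
  stmt19_general n I α β hα
end
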